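/- Let π : (X,T) → (Y,S) be an almost one-to-one distal factor map, where (X,T) is distal, between topological dynamical systems, and set Z₀ = {z ∈ X : π⁻¹(π(z)) = {z}}. Then for every z ∈ Z₀: the orbit closure cl O(z,T) is contained in Z₀, π⁻¹(cl O(π(z),S)) = cl O(z,T), and π restricts to an isomorphism from (cl O(z,T), T) onto (cl O(π(z),S), S). -/

import Mathlib

open Set Filter TopologicalSpace

/-- The `n`-th iterate (n ∈ ℤ) of a homeomorphism. -/
def hIter {X : Type*} [TopologicalSpace X] (T : X ≃ₜ X) (n : ℤ) : X → X :=
  fun x => (T.toEquiv ^ n) x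

/-- The full orbit {Tⁿ x : n ∈ ℤ} of a point. -/
def orb {X : Type*} [TopologicalSpace X] (T : X ≃ₜ X) (x : X) : Set X :=
  Set.range fun n : ℤ => hIter T n x

/-- The orbit closure of a point. -/
def orbCl {X : Type*} [TopologicalSpace X] (T : X ≃ₜ X) (x : X) : Set X :=
  closure (orb T x)

/-- A system is minimal if it has no proper nonempty closed invariant subset. -/
def IsMinimalSys {X : Type*} [TopologicalSpace X] (T : X → X) : Prop :=
  ∀ A : Set X, IsClosed A → A.Nonempty → T '' A = A → A = Set.univ

/-- `J` is a joining of the subsystems `(K,T)` and `(L,S)`: a closed `T × S`-invariant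
subset of `K ×ˢ L` projecting onto `K` and onto `L`. -/
def IsJoiningOn {X Y : Type*} [TopologicalSpace X] [TopologicalSpace Y]
    (T : X → X) (S : Y → Y) (K : Set X) (L : Set Y) (J : Set (X × Y)) : Prop :=
  IsClosed J ∧ J ⊆ K ×ˢ L ∧ Prod.map T S '' J = J ∧
    Prod.fst '' J = K ∧ Prod.snd '' J = L

/-- The subsystems `(K,T)` and `(L,S)` are disjoint: their only joining is `K ×ˢ L`. -/
def DisjointOn {X Y : Type*} [TopologicalSpace X] [TopologicalSpace Y]
    (T : X → X) (S : Y → Y) (K : Set X) (L : Set Y) : Prop :=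
  ∀ J : Set (X × Y), IsJoiningOn T S K L J → J = K ×ˢ L

/-! In a distal system every element of the enveloping semigroup `E` is injective, so an
idempotent of the compact semigroup `E ∘ p` (`p ∈ E`) is the identity; consequently orbit closures
are minimal. Given `z` with a singleton fibre and `w ∈ cl O(z)`, minimality yields `f ∈ E` with
`f w = z`. As `π` intertwines `E` with the dynamics on `Y`, every `w'` in the fibre of `w` has
`f w'` in the fibre of `z`, so `f w' = f w` and `w' = w`. Finally, `π` maps `cl O(z)` onto
`cl O(π z)` by compactness, and is injective there. -/

section Iterates

variable {X : Type*} [TopologicalSpace X] (T : X ≃ₜ X)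

theorem hIter_eq_coe_zpow (n : ℤ) : hIter T n = ⇑(T ^ n) := by
  let toPerm : (X ≃ₜ X) →* Equiv.Perm X := MonoidHom.mk' Homeomorph.toEquiv fun _ _ => rfl
  funext x
  exact congrFun (congrArg DFunLike.coe (map_zpow toPerm T n)).symm x

theorem continuous_hIter (n : ℤ) : Continuous (hIter T n) := by
  rw [hIter_eq_coe_zpow]
  exact (T ^ n).continuous

theorem hIter_zero : hIter T 0 = id := by
  rw [hIter_eq_coe_zpow, zpow_zero]
  rfl

theorem hIter_add (m n : ℤ) : hIter T (m + n) = hIter T m ∘ hIter T n := by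
  simp only [hIter_eq_coe_zpow, zpow_add]
  rfl

theorem Function.Semiconj.hIter_right {Y : Type*} [TopologicalSpace Y] {T : X ≃ₜ X}
    {S : Y ≃ₜ Y} {π : X → Y} (h : Function.Semiconj π T S) (n : ℤ) :
    Function.Semiconj π (hIter T n) (hIter S n) := by
  have hsymm : Function.Semiconj π T.symm S.symm :=
    h.inverses_right T.apply_symm_apply S.symm_apply_apply
  simp only [hIter_eq_coe_zpow]
  induction n using Int.induction_on with
  | zero => exact Function.Semiconj.id_right
  | succ n ih => rw [zpow_add_one, zpow_add_one]; exact ih.comp_right h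
  | pred n ih => rw [zpow_sub_one, zpow_sub_one]; exact ih.comp_right hsymm

end Iterates

section Ellis

variable {X : Type*} [TopologicalSpace X] (T : X ≃ₜ X)

def ellis : Set (X → X) := closure (range (hIter T))

variable {T}

theorem ellis_subset_of_isClosed {C : Set (X → X)} (hC : IsClosed C)
    (h : ∀ n, hIter T n ∈ C) : ellis T ⊆ C :=
  closure_minimal (range_subset_iff.2 h) hC

theorem hIter_mem_ellis (n : ℤ) : hIter T n ∈ ellis T :=
  subset_closure (mem_range_self n)

theorem comp_mem_ellis {f g : X → X} (hf : f ∈ ellis T) (hg : g ∈ ellis T) :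
    f ∘ g ∈ ellis T := by
  have hleft : ∀ n, hIter T n ∘ g ∈ ellis T := by
    intro n
    refine ellis_subset_of_isClosed (C := {h | hIter T n ∘ h ∈ ellis T})
      (isClosed_closure.preimage ?_) (fun m => ?_) hg
    · exact continuous_pi fun x => (continuous_hIter T n).comp (continuous_apply x)
    · rw [mem_ofPred_eq, ← hIter_add]
      exact hIter_mem_ellis _
  exact ellis_subset_of_isClosed (C := {h | h ∘ g ∈ ellis T})
    (isClosed_closure.preimage (continuous_pi fun x => continuous_apply (g x))) hleft hf

theorem apply_mem_orbCl {f : X → X} (hf : f ∈ ellis T) (z : X) : f z ∈ orbCl T z :=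
  ellis_subset_of_isClosed (C := {g | g z ∈ orbCl T z})
    (isClosed_closure.preimage (continuous_apply z)) (fun n => subset_closure ⟨n, rfl⟩) hf

variable [CompactSpace X]

theorem isCompact_ellis : IsCompact (ellis T) := isClosed_closure.isCompact

theorem exists_mem_ellis_apply_eq [T2Space X] {z w : X} (hw : w ∈ orbCl T z) :
    ∃ f ∈ ellis T, f z = w := by
  refine closure_minimal ?_ (isCompact_ellis.image (continuous_apply z)).isClosed hw
  rintro _ ⟨n, rfl⟩
  exact ⟨hIter T n, hIter_mem_ellis n, rfl⟩

end Ellis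

theorem exists_comp_self_eq_of_isCompact {X : Type*} [TopologicalSpace X] [T2Space X]
    {s : Set (X → X)} (hne : s.Nonempty) (hs : IsCompact s)
    (hcomp : ∀ f ∈ s, ∀ g ∈ s, f ∘ g ∈ s) : ∃ u ∈ s, u ∘ u = u := by
  let : Semigroup (X → X) := { mul := (· ∘ ·), mul_assoc := fun _ _ _ => rfl }
  exact exists_idempotent_in_compact_subsemigroup
    (fun r => continuous_pi fun x => continuous_apply (r x)) s hne hs hcomp

section Distal

variable {X : Type*} [MetricSpace X]

def IsDistal (T : X ≃ₜ X) : Prop :=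
  ∀ x y : X, x ≠ y → ∃ ε > (0 : ℝ), ∀ n : ℤ, ε ≤ dist (hIter T n x) (hIter T n y)

variable {T : X ≃ₜ X}

theorem IsDistal.injective_of_mem_ellis (hT : IsDistal T) {f : X → X} (hf : f ∈ ellis T) :
    Function.Injective f := by
  intro w w' hww'
  by_contra hne
  obtain ⟨ε, hε, hsep⟩ := hT w w' hne
  have hfsep : ε ≤ dist (f w) (f w') :=
    ellis_subset_of_isClosed (C := {g | ε ≤ dist (g w) (g w')})
      (isClosed_le continuous_const ((continuous_apply w).dist (continuous_apply w'))) hsep hf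
  rw [hww', dist_self] at hfsep
  exact hε.not_ge hfsep

/-- In a distal system orbit closures are minimal. -/
theorem IsDistal.mem_orbCl_symm [CompactSpace X] (hT : IsDistal T) {z w : X}
    (hw : w ∈ orbCl T z) : z ∈ orbCl T w := by
  obtain ⟨p, hp, rfl⟩ := exists_mem_ellis_apply_eq hw
  -- An idempotent of the compact semigroup `ellis T ∘ p` is injective, hence the identity.
  obtain ⟨u, ⟨q, hq, rfl⟩, hidem⟩ := exists_comp_self_eq_of_isCompact
    (s := (· ∘ p) '' ellis T) ⟨p, id, hIter_zero T ▸ hIter_mem_ellis 0, rfl⟩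
    (isCompact_ellis.image (continuous_pi fun x => continuous_apply (p x)))
    (by
      rintro _ ⟨f, hf, rfl⟩ _ ⟨g, hg, rfl⟩
      exact ⟨f ∘ p ∘ g, comp_mem_ellis hf (comp_mem_ellis hp hg), rfl⟩)
  have hqp : q (p z) = z := hT.injective_of_mem_ellis (comp_mem_ellis hq hp) (congrFun hidem z)
  have hmem := apply_mem_orbCl hq (p z)
  rwa [hqp] at hmem

end Distal

section Fibres

variable {α β : Type*} {f : α → β} {A : Set α}

theorem Set.injOn_of_subset_singleton_fibres (hA : A ⊆ {a | f ⁻¹' {f a} = {a}}) :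
    InjOn f A := by
  intro a ha b _ hab
  have hb : b ∈ f ⁻¹' {f a} := hab.symm
  rw [hA ha] at hb
  exact hb.symm

theorem Set.preimage_image_eq_of_subset_singleton_fibres
    (hA : A ⊆ {a | f ⁻¹' {f a} = {a}}) : f ⁻¹' (f '' A) = A := by
  refine Subset.antisymm ?_ (subset_preimage_image f A)
  rintro b ⟨a, ha, hab⟩
  have hb : b ∈ f ⁻¹' {f a} := hab.symm
  rw [hA ha, mem_singleton_iff] at hb
  rwa [hb]

end Fibres

section FactorMap

variable {Y : Type*} [TopologicalSpace Y] [T2Space Y] {S : Y ≃ₜ Y}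

theorem Function.Semiconj.image_orbCl {X : Type*} [TopologicalSpace X] [CompactSpace X]
    {T : X ≃ₜ X} {π : X → Y} (hπ : Function.Semiconj π T S) (hπc : Continuous π) (z : X) :
    π '' orbCl T z = orbCl S (π z) := by
  have horb : π '' orb T z = orb S (π z) := by
    simp only [orb, ← range_comp]
    exact congrArg range (funext fun n => hπ.hIter_right n z)
  apply Subset.antisymm
  · calc π '' orbCl T z ⊆ closure (π '' orb T z) := image_closure_subset_closure_image hπc
      _ = orbCl S (π z) := congrArg closure horb
  · exact closure_minimal (horb ▸ image_mono subset_closure)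
      (isClosed_closure.isCompact.image hπc).isClosed

theorem IsDistal.orbCl_subset_singleton_fibres {X : Type*} [MetricSpace X] [CompactSpace X]
    {T : X ≃ₜ X} {π : X → Y} (hT : IsDistal T) (hπ : Function.Semiconj π T S)
    (hπc : Continuous π) {z : X} (hz : π ⁻¹' {π z} = {z}) :
    orbCl T z ⊆ {w | π ⁻¹' {π w} = {w}} := by
  intro w hw
  refine eq_singleton_iff_unique_mem.2 ⟨rfl, fun w' hw' => ?_⟩
  obtain ⟨f, hf, hfw⟩ := exists_mem_ellis_apply_eq (hT.mem_orbCl_symm hw)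
  have hfib : π (f w') = π (f w) :=
    ellis_subset_of_isClosed (C := {g | π (g w') = π (g w)})
      (isClosed_eq (hπc.comp (continuous_apply w')) (hπc.comp (continuous_apply w)))
      (fun n => by simp only [mem_ofPred_eq, hπ.hIter_right n _, show π w' = π w from hw']) hf
  have hfz : f w' ∈ π ⁻¹' {π z} := by rw [mem_preimage, hfib, hfw, mem_singleton_iff]
  rw [hz, mem_singleton_iff] at hfz
  exact hT.injective_of_mem_ellis hf (hfz.trans hfw.symm)

end FactorMap

theorem stmt_17_general {X Y : Type*} [MetricSpace X] [CompactSpace X]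
    [MetricSpace Y] (T : X ≃ₜ X) (S : Y ≃ₜ Y)
    (π : X → Y) (hπc : Continuous π)
    (hπ : ∀ x, π (T x) = S (π x))
    (hXdistal : ∀ x y : X, x ≠ y →
      ∃ ε > (0 : ℝ), ∀ n : ℤ, ε ≤ dist (hIter T n x) (hIter T n y)) :
    ∀ z ∈ {z : X | π ⁻¹' {π z} = {z}},
      orbCl T z ⊆ {w : X | π ⁻¹' {π w} = {w}} ∧
      π ⁻¹' (orbCl S (π z)) = orbCl T z ∧
      Set.BijOn π (orbCl T z) (orbCl S (π z)) := by
  intro z hz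
  have hsub : orbCl T z ⊆ {w | π ⁻¹' {π w} = {w}} :=
    IsDistal.orbCl_subset_singleton_fibres hXdistal hπ hπc hz
  rw [← Function.Semiconj.image_orbCl hπ hπc z]
  exact ⟨hsub, preimage_image_eq_of_subset_singleton_fibres hsub,
    (injOn_of_subset_singleton_fibres hsub).bijOn_image⟩

/-- Let π : (X,T) → (Y,S) be an almost one-to-one distal factor map with (X,T) distal,
and Z₀ = {z : π⁻¹(π z) = {z}}. Then for every z ∈ Z₀ the orbit closure of z is
contained in Z₀, π⁻¹(cl O(π z, S)) = cl O(z, T), and π restricts to an isomorphism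
(here: a bijection, automatically a conjugating homeomorphism) between them. -/
theorem stmt_17 {X Y : Type*} [MetricSpace X] [CompactSpace X]
    [MetricSpace Y] [CompactSpace Y] (T : X ≃ₜ X) (S : Y ≃ₜ Y)
    (π : X → Y) (hπc : Continuous π) (hπs : Function.Surjective π)
    (hπ : ∀ x, π (T x) = S (π x))
    (hXdistal : ∀ x y : X, x ≠ y →
      ∃ ε > (0 : ℝ), ∀ n : ℤ, ε ≤ dist (hIter T n x) (hIter T n y))
    (hdistalext : ∀ x₁ x₂ : X, π x₁ = π x₂ → x₁ ≠ x₂ →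
      ∃ ε > (0 : ℝ), ∀ n : ℤ, ε ≤ dist (hIter T n x₁) (hIter T n x₂))
    (halmost : ∃ X₀ : Set X, IsGδ X₀ ∧ Dense X₀ ∧ X₀ ⊆ {z : X | π ⁻¹' {π z} = {z}}) :
    ∀ z ∈ {z : X | π ⁻¹' {π z} = {z}},
      orbCl T z ⊆ {w : X | π ⁻¹' {π w} = {w}} ∧
      π ⁻¹' (orbCl S (π z)) = orbCl T z ∧
      Set.BijOn π (orbCl T z) (orbCl S (π z)) :=
  stmt_17_general T S π hπc hπ hXdistal
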